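/- arXiv:2209.03730 — 6 statements merged into one kernel-verified Lean document; each statement's English description precedes it below -/
import Mathlib

section
/- Let v be a binary vector of length n ≥ 1 and let N be a positive integer. Then 2^n divides 3^{m(v)}·N + P(v) if and only if the parity vector of length n of N equals v; and in that case T^n(N) = (3^{m(v)}·N + P(v)) / 2^n. (Paper's Theorem 4.5.) -/
/-!
Write `A_v(N) = 3^{m(v)} N + P(v)`. Peeling off the first entry `e` of `e :: v`, one has
`A_{e::v}(N) = 2 A_v(T N)` when `e` is the parity of `N`, while `A_{e::v}(N) ≡ N + e` is odd
otherwise. Induction on `v` then shows that `2^{|v|} ∣ A_v(N)` exactly when `N` follows the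
parity pattern `v`, and that `2^{|v|} T^{|v|}(N) = A_v(N)` in that case.
-/

/-- The Collatz map `T`. -/
def collatzT (N : ℕ) : ℕ := if N % 2 = 0 then N / 2 else (3 * N + 1) / 2

/-- The parity vector of length `n` of `N`: entry `k` is `true` iff `T^[k] N` is odd. -/
def parityVec (N n : ℕ) : List Bool :=
  (List.range n).map (fun k => decide ((collatzT^[k] N) % 2 = 1))

/-- `m(v)`: the number of ones of a binary vector. -/
def mOnes (v : List Bool) : ℕ := v.count true

/-- `P(v)`: the characteristic number of a binary vector,
`P(v) = Σ_{k=1}^{m} 3^(m-k) * 2^(j_k - 1)` where `j_1 < … < j_m` are the positions of ones. -/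
def Pchar : List Bool → ℕ
  | [] => 0
  | e :: rest => (if e then 3 ^ mOnes rest else 0) + 2 * Pchar rest

lemma parityVec_succ (N n : ℕ) :
    parityVec N (n + 1) = decide (N % 2 = 1) :: parityVec (collatzT N) n := by
  simp only [parityVec, List.range_succ_eq_map, List.map_cons, List.map_map,
    Function.iterate_zero_apply, Function.comp_def, Function.iterate_succ_apply]
  rfl

lemma two_mul_collatzT_of_even {N : ℕ} (h : N % 2 = 0) : 2 * collatzT N = N := by
  simp only [collatzT, if_pos h]; omega

lemma two_mul_collatzT_of_odd {N : ℕ} (h : N % 2 = 1) : 2 * collatzT N = 3 * N + 1 := by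
  simp only [collatzT, if_neg (by omega : ¬N % 2 = 0)]; omega

def collatzAffine (v : List Bool) (N : ℕ) : ℕ := 3 ^ mOnes v * N + Pchar v

lemma collatzAffine_cons_of_parity_eq {e : Bool} {N : ℕ} (v : List Bool)
    (h : decide (N % 2 = 1) = e) :
    collatzAffine (e :: v) N = 2 * collatzAffine v (collatzT N) := by
  subst h
  rcases Nat.mod_two_eq_zero_or_one N with hN | hN
  · have hT := two_mul_collatzT_of_even hN
    simp only [collatzAffine, mOnes, hN, zero_ne_one, decide_false, ne_eq, Bool.false_eq_true,
      not_false_eq_true, List.count_cons_of_ne, Pchar, ↓reduceIte, zero_add]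
    linear_combination (3 ^ List.count true v) * hT.symm
  · have hT := two_mul_collatzT_of_odd hN
    simp only [collatzAffine, mOnes, hN, decide_true, List.count_cons_self, Pchar, ↓reduceIte]
    linear_combination (3 ^ List.count true v) * hT.symm

lemma not_two_dvd_collatzAffine_cons {e : Bool} {N : ℕ} (v : List Bool)
    (h : decide (N % 2 = 1) ≠ e) : ¬ 2 ∣ collatzAffine (e :: v) N := by
  have h3 : 3 ^ mOnes v % 2 = 1 := by rw [Nat.pow_mod]; norm_num
  cases e <;> simp_all [collatzAffine, mOnes, Pchar, pow_succ, Nat.dvd_iff_mod_eq_zero,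
    Nat.add_mod, Nat.mul_mod]

lemma two_pow_mul_iterate_of_parityVec_eq {v : List Bool} {N : ℕ}
    (h : parityVec N v.length = v) :
    2 ^ v.length * collatzT^[v.length] N = collatzAffine v N := by
  induction v generalizing N with
  | nil => simp [collatzAffine, mOnes, Pchar]
  | cons e v ih =>
    rw [List.length_cons, parityVec_succ, List.cons.injEq] at h
    rw [List.length_cons, Function.iterate_succ_apply, pow_succ', mul_assoc, ih h.2,
      collatzAffine_cons_of_parity_eq v h.1]

lemma parityVec_eq_of_two_pow_dvd {v : List Bool} {N : ℕ}
    (h : 2 ^ v.length ∣ collatzAffine v N) : parityVec N v.length = v := by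
  induction v generalizing N with
  | nil => rfl
  | cons e v ih =>
    have he : decide (N % 2 = 1) = e := by
      by_contra hne
      exact not_two_dvd_collatzAffine_cons v hne ((dvd_pow_self 2 (Nat.succ_ne_zero _)).trans h)
    rw [List.length_cons, pow_succ', collatzAffine_cons_of_parity_eq v he,
      mul_dvd_mul_iff_left two_ne_zero] at h
    rw [List.length_cons, parityVec_succ, he, ih h]

theorem two_pow_dvd_collatzAffine_iff {v : List Bool} {N : ℕ} :
    2 ^ v.length ∣ collatzAffine v N ↔ parityVec N v.length = v :=
  ⟨parityVec_eq_of_two_pow_dvd, fun h => ⟨_, (two_pow_mul_iterate_of_parityVec_eq h).symm⟩⟩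

theorem stmt_1_general (n : ℕ) (v : List Bool) (hv : v.length = n)
    (N : ℕ) :
    ((2 ^ n ∣ 3 ^ mOnes v * N + Pchar v) ↔ parityVec N n = v) ∧
    (parityVec N n = v →
      collatzT^[n] N = (3 ^ mOnes v * N + Pchar v) / 2 ^ n) := by
  subst hv
  refine ⟨two_pow_dvd_collatzAffine_iff, fun h => ?_⟩
  rw [← collatzAffine, ← two_pow_mul_iterate_of_parityVec_eq h]
  exact (Nat.mul_div_cancel_left _ (by positivity)).symm

/-- Paper's Theorem 4.5: `2^n ∣ 3^(m v) * N + P v` iff the parity vector of length n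
of N equals v, and in that case `T^[n] N = (3^(m v) * N + P v) / 2^n`. -/
theorem stmt_1 (n : ℕ) (hn : 1 ≤ n) (v : List Bool) (hv : v.length = n)
    (N : ℕ) (hN : 0 < N) :
    ((2 ^ n ∣ 3 ^ mOnes v * N + Pchar v) ↔ parityVec N n = v) ∧
    (parityVec N n = v →
      collatzT^[n] N = (3 ^ mOnes v * N + Pchar v) / 2 ^ n) :=
  stmt_1_general n v hv N
end

section
/- Let v be a binary vector of length n ≥ 1 and let M, N be positive integers. If the parity vectors of length n of M and of N both equal v, then 2^n divides M − N (as an integer). Conversely, if the parity vector of length n of M equals v and N ≡ M (mod 2^n), then the parity vector of length n of N equals v. (Claim established in the proof of the paper's Theorem 4.5; it justifies Notation 2.2, that the set H(v) of first terms realizing v is the arithmetic progression N_0(v) + 2^n·ℕ.) -/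
lemma two_mul_collatzT (N : ℕ) :
    2 * (collatzT N : ℤ) = if N % 2 = 0 then (N : ℤ) else 3 * N + 1 := by
  unfold collatzT
  split_ifs <;> omega

lemma two_mul_collatzT_sub {M N : ℕ} (h : M % 2 = N % 2) :
    2 * ((collatzT M : ℤ) - collatzT N) = (if M % 2 = 0 then 1 else 3) * ((M : ℤ) - N) := by
  rw [mul_sub, two_mul_collatzT, two_mul_collatzT, ← h]
  split_ifs <;> ring

lemma two_pow_succ_dvd_sub_iff {M N : ℕ} (h : M % 2 = N % 2) (n : ℕ) :
    (2 : ℤ) ^ (n + 1) ∣ (M : ℤ) - N ↔ (2 : ℤ) ^ n ∣ (collatzT M : ℤ) - collatzT N := by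
  rw [← mul_dvd_mul_iff_left (two_ne_zero' ℤ) (b := (2 : ℤ) ^ n), ← pow_succ',
    two_mul_collatzT_sub h]
  set c : ℤ := if M % 2 = 0 then 1 else 3
  have hc : IsCoprime ((2 : ℤ) ^ (n + 1)) c :=
    (Int.isCoprime_two_left.mpr (by unfold c; split_ifs <;> decide)).pow_left
  exact ⟨fun hd => hd.mul_left c, hc.dvd_of_dvd_mul_left⟩

theorem parityVec_eq_iff_two_pow_dvd_sub (n : ℕ) :
    ∀ M N : ℕ, parityVec M n = parityVec N n ↔ (2 : ℤ) ^ n ∣ (M : ℤ) - N := by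
  induction n with
  | zero => simp [parityVec]
  | succ n ih =>
    intro M N
    rw [parityVec_succ, parityVec_succ, List.cons.injEq, ih, decide_eq_decide]
    constructor
    · rintro ⟨hpar, hdvd⟩
      exact (two_pow_succ_dvd_sub_iff (by omega) n).mpr hdvd
    · intro hdvd
      have hpar : M % 2 = N % 2 := by
        have : (2 : ℤ) ∣ (M : ℤ) - N := (dvd_pow_self 2 n.succ_ne_zero).trans hdvd
        omega
      exact ⟨by omega, (two_pow_succ_dvd_sub_iff hpar n).mp hdvd⟩

theorem stmt_2_general (n : ℕ) (v : List Bool)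
    (M N : ℕ) :
    (parityVec M n = v → parityVec N n = v → ((2 : ℤ) ^ n ∣ (M : ℤ) - (N : ℤ))) ∧
    (parityVec M n = v → N ≡ M [MOD 2 ^ n] → parityVec N n = v) := by
  refine ⟨fun hM hN => (parityVec_eq_iff_two_pow_dvd_sub n M N).mp (hM.trans hN.symm), ?_⟩
  intro hM hNM
  rw [← hM, eq_comm, parityVec_eq_iff_two_pow_dvd_sub]
  exact_mod_cast Nat.modEq_iff_dvd.mp hNM

/-- If M and N both realize the parity vector v of length n then `2^n ∣ M - N`;
conversely if M realizes v and `N ≡ M [MOD 2^n]` then N realizes v. -/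
theorem stmt_2 (n : ℕ) (hn : 1 ≤ n) (v : List Bool) (hv : v.length = n)
    (M N : ℕ) (hM : 0 < M) (hN : 0 < N) :
    (parityVec M n = v → parityVec N n = v → ((2 : ℤ) ^ n ∣ (M : ℤ) - (N : ℤ))) ∧
    (parityVec M n = v → N ≡ M [MOD 2 ^ n] → parityVec N n = v) :=
  stmt_2_general n v M N
end

section
/- For every n ≥ 1 and every binary vector v of length n, there exists a positive integer N with 1 ≤ N ≤ 2^n whose parity vector of length n equals v. (Claim underlying the paper's Notation 2.1: 1 ≤ N_0(v) ≤ 2^{n(v)}.) -/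
lemma collatzT_two_mul (M : ℕ) : collatzT (2 * M) = M := by
  simp [collatzT]

lemma collatzT_of_three_mul_add_one_eq_two_mul {N x : ℕ} (h : 3 * N + 1 = 2 * x) :
    collatzT N = x := by
  simp only [collatzT]
  rw [if_neg (by omega)]
  omega

lemma collatzT_modEq {k N M : ℕ} (h : N ≡ M [MOD 2 ^ (k + 1)]) :
    collatzT N ≡ collatzT M [MOD 2 ^ k] := by
  have hpar : N % 2 = M % 2 := Nat.ModEq.of_dvd (dvd_pow_self 2 k.succ_ne_zero) h
  rw [pow_succ'] at h
  rcases Nat.mod_two_eq_zero_or_one N with hN | hN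
  · obtain ⟨a, rfl⟩ : 2 ∣ N := Nat.dvd_of_mod_eq_zero hN
    obtain ⟨b, rfl⟩ : 2 ∣ M := Nat.dvd_of_mod_eq_zero (hpar ▸ hN)
    rw [collatzT_two_mul, collatzT_two_mul]
    exact Nat.ModEq.mul_left_cancel' two_ne_zero h
  · obtain ⟨a, ha⟩ : 2 ∣ 3 * N + 1 := by omega
    obtain ⟨b, hb⟩ : 2 ∣ 3 * M + 1 := by omega
    rw [collatzT_of_three_mul_add_one_eq_two_mul ha, collatzT_of_three_mul_add_one_eq_two_mul hb]
    refine Nat.ModEq.mul_left_cancel' two_ne_zero ?_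
    rw [← ha, ← hb]
    exact (h.mul_left 3).add_right 1

lemma parityVec_eq_of_modEq {k N M : ℕ} (h : N ≡ M [MOD 2 ^ k]) :
    parityVec N k = parityVec M k := by
  induction k generalizing N M with
  | zero => rfl
  | succ k ih =>
    have hpar : N % 2 = M % 2 := Nat.ModEq.of_dvd (dvd_pow_self 2 k.succ_ne_zero) h
    rw [parityVec_succ, parityVec_succ, hpar, ih (collatzT_modEq h)]

lemma exists_odd_le_collatzT_modEq (k M : ℕ) :
    ∃ N, N % 2 = 1 ∧ N ≤ 2 ^ (k + 1) ∧ collatzT N ≡ M [MOD 2 ^ k] := by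
  have co : (2 ^ k).Coprime 3 := Nat.Coprime.pow_left _ (by norm_num)
  obtain ⟨x, hx, hxM, hx3 : x % 3 = 2⟩ :
      ∃ x < 2 ^ k * 3, x ≡ M [MOD 2 ^ k] ∧ x ≡ 2 [MOD 3] :=
    ⟨_, Nat.chineseRemainder_lt_mul co M 2 (by positivity) (by norm_num),
      (Nat.chineseRemainder co M 2).2⟩
  obtain ⟨N, hN⟩ : ∃ N, 3 * N + 1 = 2 * x := ⟨(2 * x - 1) / 3, by omega⟩
  refine ⟨N, by omega, by rw [pow_succ]; omega, ?_⟩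
  rwa [collatzT_of_three_mul_add_one_eq_two_mul hN]

theorem exists_parityVec_eq (v : List Bool) :
    ∃ N, 1 ≤ N ∧ N ≤ 2 ^ v.length ∧ parityVec N v.length = v := by
  induction v with
  | nil => exact ⟨1, le_rfl, le_rfl, rfl⟩
  | cons b rest ih =>
    obtain ⟨M, hM1, hM2, hMv⟩ := ih
    rw [List.length_cons]
    cases b with
    | false =>
      refine ⟨2 * M, by omega, by rw [pow_succ]; omega, ?_⟩
      rw [parityVec_succ, collatzT_two_mul, hMv]
      simp
    | true =>
      obtain ⟨N, hN, hN2, hTN⟩ := exists_odd_le_collatzT_modEq rest.length M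
      refine ⟨N, by omega, hN2, ?_⟩
      rw [parityVec_succ, parityVec_eq_of_modEq hTN, hMv, hN]
      rfl

theorem stmt_3_general (n : ℕ) (v : List Bool) (hv : v.length = n) :
    ∃ N : ℕ, 1 ≤ N ∧ N ≤ 2 ^ n ∧ parityVec N n = v := by
  subst hv
  exact exists_parityVec_eq v

/-- For every binary vector v of length n ≥ 1, there is a positive integer
`N ≤ 2^n` whose parity vector of length n equals v. -/
theorem stmt_3 (n : ℕ) (hn : 1 ≤ n) (v : List Bool) (hv : v.length = n) :
    ∃ N : ℕ, 1 ≤ N ∧ N ≤ 2 ^ n ∧ parityVec N n = v :=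
  stmt_3_general n v hv
end

section
/- Let n ≥ m ≥ 1 be integers. For every binary vector v of length n with m(v) = m, one has P(v) ≤ 2^{n−m}·(3^m − 2^m); moreover equality holds for the vector whose entries are 0 in positions 1,…,n−m and 1 in positions n−m+1,…,n. (Paper's Theorem 4.3.) -/
@[simp]
lemma mOnes_cons_true (v : List Bool) : mOnes (true :: v) = mOnes v + 1 := by
  simp [mOnes]

@[simp]
lemma mOnes_cons_false (v : List Bool) : mOnes (false :: v) = mOnes v := by
  simp [mOnes]

lemma mOnes_le_length (v : List Bool) : mOnes v ≤ v.length :=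
  List.count_le_length

@[simp]
lemma mOnes_replicate_true (m : ℕ) : mOnes (List.replicate m true) = m := by
  simp [mOnes]

@[simp]
lemma Pchar_cons_true (v : List Bool) : Pchar (true :: v) = 3 ^ mOnes v + 2 * Pchar v := by
  simp [Pchar]

@[simp]
lemma Pchar_cons_false (v : List Bool) : Pchar (false :: v) = 2 * Pchar v := by
  simp [Pchar]

lemma Pchar_add_two_pow_length_le (v : List Bool) :
    Pchar v + 2 ^ v.length ≤ 2 ^ (v.length - mOnes v) * 3 ^ mOnes v := by
  induction v with
  | nil => simp [Pchar, mOnes]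
  | cons e v ih =>
    have hle := mOnes_le_length v
    cases e
    · have hlen : v.length + 1 - mOnes v = v.length - mOnes v + 1 := by omega
      simp only [Pchar_cons_false, mOnes_cons_false, List.length_cons, hlen, pow_succ]
      linarith
    · have h3 : 3 ^ mOnes v ≤ 2 ^ (v.length - mOnes v) * 3 ^ mOnes v :=
        Nat.le_mul_of_pos_left _ (by positivity)
      simp only [Pchar_cons_true, mOnes_cons_true, List.length_cons, Nat.add_sub_add_right,
        pow_succ]
      linarith

lemma Pchar_le (v : List Bool) :
    Pchar v ≤ 2 ^ (v.length - mOnes v) * (3 ^ mOnes v - 2 ^ mOnes v) := by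
  have h := Pchar_add_two_pow_length_le v
  have hsplit : 2 ^ v.length = 2 ^ (v.length - mOnes v) * 2 ^ mOnes v := by
    rw [← pow_add, Nat.sub_add_cancel (mOnes_le_length v)]
  rw [Nat.mul_sub]
  omega

lemma Pchar_replicate_true_add_two_pow (m : ℕ) : Pchar (List.replicate m true) + 2 ^ m = 3 ^ m := by
  induction m with
  | zero => simp [Pchar]
  | succ k ih =>
    rw [List.replicate_succ, Pchar_cons_true, mOnes_replicate_true, pow_succ, pow_succ]
    omega

lemma Pchar_replicate_false_append (k : ℕ) (w : List Bool) :
    Pchar (List.replicate k false ++ w) = 2 ^ k * Pchar w := by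
  induction k with
  | zero => simp
  | succ j ih =>
    rw [List.replicate_succ, List.cons_append, Pchar_cons_false, ih, pow_succ]
    ring

theorem stmt_5_general (n m : ℕ) :
    (∀ v : List Bool, v.length = n → mOnes v = m →
      Pchar v ≤ 2 ^ (n - m) * (3 ^ m - 2 ^ m)) ∧
    Pchar (List.replicate (n - m) false ++ List.replicate m true) =
      2 ^ (n - m) * (3 ^ m - 2 ^ m) := by
  refine ⟨fun v hlen hones => hlen ▸ hones ▸ Pchar_le v, ?_⟩
  rw [Pchar_replicate_false_append, ← Pchar_replicate_true_add_two_pow m, Nat.add_sub_cancel]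

/-- Paper's Theorem 4.3: for v of length n with m(v) = m (n ≥ m ≥ 1),
`P v ≤ 2^(n-m) * (3^m - 2^m)`, with equality for the vector
`(0,…,0,1,…,1)` (n-m zeros then m ones). -/
theorem stmt_5 (n m : ℕ) (hm : 1 ≤ m) (hmn : m ≤ n) :
    (∀ v : List Bool, v.length = n → mOnes v = m →
      Pchar v ≤ 2 ^ (n - m) * (3 ^ m - 2 ^ m)) ∧
    Pchar (List.replicate (n - m) false ++ List.replicate m true) =
      2 ^ (n - m) * (3 ^ m - 2 ^ m) :=
  stmt_5_general n m
end

section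
/- Let v₁ and v₂ be binary vectors of lengths n₁ and n₂ respectively, and let v = v₁ ++ v₂ be their concatenation, a binary vector of length n₁ + n₂. Then P(v) = 3^{m(v₂)}·P(v₁) + 2^{n₁}·P(v₂). (Paper's Proposition 4.1.) -/
theorem mOnes_append (v₁ v₂ : List Bool) : mOnes (v₁ ++ v₂) = mOnes v₁ + mOnes v₂ :=
  List.count_append ..

theorem Pchar_append (v₁ v₂ : List Bool) :
    Pchar (v₁ ++ v₂) = 3 ^ mOnes v₂ * Pchar v₁ + 2 ^ v₁.length * Pchar v₂ := by
  induction v₁ with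
  | nil => simp [Pchar]
  | cons e rest ih =>
    cases e <;> simp only [List.cons_append, Pchar, ih, mOnes_append, List.length_cons,
      Bool.false_eq_true, ite_true, ite_false, pow_add, pow_succ] <;> ring

theorem stmt_7_general (n₁ : ℕ) (v₁ v₂ : List Bool)
    (h₁ : v₁.length = n₁) :
    Pchar (v₁ ++ v₂) = 3 ^ mOnes v₂ * Pchar v₁ + 2 ^ n₁ * Pchar v₂ := by
  subst h₁
  exact Pchar_append v₁ v₂

/-- Paper's Proposition 4.1: `P (v₁ ++ v₂) = 3^(m v₂) * P v₁ + 2^(n₁) * P v₂`. -/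
theorem stmt_7 (n₁ n₂ : ℕ) (v₁ v₂ : List Bool)
    (h₁ : v₁.length = n₁) (h₂ : v₂.length = n₂) :
    Pchar (v₁ ++ v₂) = 3 ^ mOnes v₂ * Pchar v₁ + 2 ^ n₁ * Pchar v₂ :=
  stmt_7_general n₁ v₁ v₂ h₁
end

section
/- Let V = (e_1, e_2, …) be an infinite binary sequence containing infinitely many entries equal to 1. For j ≥ 1 let m_j(V) and P_j(V) denote m(R_j(V)) and P(R_j(V)) for the truncation R_j(V) = (e_1, …, e_j), and write P_j(V) = 3^{m_j(V)}·α_j + β_j with 0 ≤ β_j < 3^{m_j(V)} (so α_j = ⌊P_j(V)/3^{m_j(V)}⌋). Then the real sequence α_j / 2^j tends to 0 as j → ∞. (Paper's Corollary 5.8.) -/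
/-
By the recursion `P(e :: w) = [e] * 3^m(w) + 2 * P(w)`, prepending a `0` doubles the bound and
prepending a `1` triples it, so `P(v) < 3^m * 2^(n - m)` for a vector of length `n` with `m` ones.
Hence `α_j < 2^(j - m_j)`, i.e. `α_j / 2^j < 2^(-m_j)`, and `m_j → ∞` when `V` has infinitely
many ones.
-/

open Filter

lemma Pchar_lt (v : List Bool) : Pchar v < 3 ^ mOnes v * 2 ^ (v.length - mOnes v) := by
  induction v with
  | nil => simp [Pchar, mOnes]
  | cons e rest ih =>
    have hm : mOnes rest ≤ rest.length := List.count_le_length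
    have h1 : 1 ≤ 2 ^ (rest.length - mOnes rest) := Nat.one_le_two_pow
    cases e with
    | true =>
      have hmOnes : mOnes (true :: rest) = mOnes rest + 1 := List.count_cons_self
      rw [Pchar, if_pos rfl, hmOnes, List.length_cons, Nat.add_sub_add_right, pow_succ]
      nlinarith
    | false =>
      have hmOnes : mOnes (false :: rest) = mOnes rest := by simp [mOnes]
      rw [Pchar, if_neg Bool.false_ne_true, zero_add, hmOnes, List.length_cons,
        Nat.sub_add_comm hm, pow_succ]
      nlinarith

lemma Pchar_div_lt (v : List Bool) : Pchar v / 3 ^ mOnes v < 2 ^ (v.length - mOnes v) :=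
  (Nat.div_lt_iff_lt_mul (by positivity)).2 (mul_comm (3 ^ mOnes v) _ ▸ Pchar_lt v)

lemma Pchar_div_div_two_pow_le (v : List Bool) :
    ((Pchar v / 3 ^ mOnes v : ℕ) : ℝ) / 2 ^ v.length ≤ (1 / 2) ^ mOnes v := by
  have hm : mOnes v ≤ v.length := List.count_le_length
  have hα : ((Pchar v / 3 ^ mOnes v : ℕ) : ℝ) ≤ 2 ^ (v.length - mOnes v) := by
    exact_mod_cast (Pchar_div_lt v).le
  rw [div_le_iff₀ (by positivity), ← Nat.sub_add_cancel hm, pow_add, one_div_pow,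
    mul_left_comm, one_div_mul_cancel (by positivity), mul_one]
  exact hα

lemma mOnes_map_range (V : ℕ → Bool) (j : ℕ) :
    mOnes ((List.range j).map V) = Nat.count (fun i => V i = true) j := by
  induction j with
  | zero => rfl
  | succ j ih =>
    rw [Nat.count_succ, ← ih]
    cases hj : V j <;> simp [mOnes, List.range_succ, hj]

lemma Nat.tendsto_count_atTop {p : ℕ → Prop} [DecidablePred p] (h : {n | p n}.Infinite) :
    Tendsto (Nat.count p) atTop atTop :=
  tendsto_atTop_atTop_of_monotone (Nat.count_monotone p) fun n =>
    let ⟨a, ha⟩ := Nat.surjective_count_of_infinite_setOfPred h n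
    ⟨a, ha.ge⟩

/-- Paper's Corollary 5.8: with `α_j = ⌊P_j(V) / 3^(m_j(V))⌋` (so that
`P_j(V) = 3^(m_j(V)) * α_j + β_j` with `0 ≤ β_j < 3^(m_j(V))`), for an infinite
binary sequence with infinitely many ones one has `α_j / 2^j → 0`. -/
theorem stmt_18 (V : ℕ → Bool) (hinf : {i : ℕ | V i = true}.Infinite) :
    Filter.Tendsto
      (fun j => ((Pchar ((List.range j).map V) /
        3 ^ mOnes ((List.range j).map V) : ℕ) : ℝ) / 2 ^ j)
      Filter.atTop (nhds 0) := by
  have hm : Tendsto (fun j => mOnes ((List.range j).map V)) atTop atTop := by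
    simpa only [mOnes_map_range] using Nat.tendsto_count_atTop hinf
  have hhalf : Tendsto (fun m : ℕ => (1 / 2 : ℝ) ^ m) atTop (nhds 0) :=
    tendsto_pow_atTop_nhds_zero_of_lt_one (by norm_num) (by norm_num)
  refine squeeze_zero (fun j => by positivity) (fun j => ?_) (hhalf.comp hm)
  have hbound := Pchar_div_div_two_pow_le ((List.range j).map V)
  rwa [List.length_map, List.length_range] at hbound
end
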